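/- arXiv:1804.04972 — 3 statements merged into one kernel-verified Lean document; each statement's English description precedes it below -/
import Mathlib

section
/- The valuation polygon of Ψ_q is: v(Ψ_q, μ) = μ for μ ≥ −1, and v(Ψ_q, μ) = q^{j−1}(μ + j − 1) − (q^{j−2} + ⋯ + q + 1) for −j ≤ μ ≤ 1−j, for every integer j ≥ 1, where v(Ψ_q, μ) = inf_i (v_p(a_i) + i μ) for Ψ_q = Σ a_i T^i. -/
open PowerSeries

/-- `Ψ ∈ T + T²ℤ[[T]]` satisfies `∑_{j≥0} p^{-j} Ψ(p^j T)^{q^j} = T` (coefficientwise). -/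
def IsPsi (p q : ℕ) (Ψ : PowerSeries ℤ) : Prop :=
  PowerSeries.constantCoeff Ψ = 0 ∧ PowerSeries.coeff 1 Ψ = 1 ∧
  ∀ n : ℕ,
    (∑ j ∈ Finset.range (n + 1),
      ((p : ℚ) ^ j)⁻¹ *
        PowerSeries.coeff n
          ((PowerSeries.rescale ((p : ℚ) ^ j) (Ψ.map (Int.castRingHom ℚ))) ^ (q ^ j)))
      = PowerSeries.coeff n (PowerSeries.X : PowerSeries ℚ)

/-- Evaluation of the entire function defined by an integral power series at a point of a
complete nonarchimedean field. -/
noncomputable def psiEval (Ψ : PowerSeries ℤ) {K : Type} [NormedField K] (x : K) : K :=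
  ∑' i : ℕ, ((PowerSeries.coeff i Ψ : ℤ) : K) * x ^ i

/-- The valuation polygon function `v(Ψ, μ) = inf_{i, a_i ≠ 0} (v_p(a_i) + iμ)` of an
integral power series `Ψ = ∑ a_i T^i`. -/
noncomputable def valPolygon (p : ℕ) (Ψ : PowerSeries ℤ) (μ : ℝ) : ℝ :=
  ⨅ i : {i : ℕ // PowerSeries.coeff i Ψ ≠ 0},
    ((padicValInt p (PowerSeries.coeff (i : ℕ) Ψ) : ℝ) + (i : ℕ) * μ)

/-!
Write `s_k = 1 + q + ⋯ + q^(k-1)` and `a_n` for the coefficients of `Ψ`. Comparing coefficients in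
the functional equation gives, for `n ≥ 2`, the recurrence
`a_n = -∑_{j ≥ 1} p^(j(n-1)) [T^n] Ψ^(q^j)`, and strong induction on `n` turns it into
`v_p(a_n) ≥ k n - s_k` for every `k`. Consecutive lines meet at the points
`(q^m, (m+1) q^m - s_(m+1))`, which are attained: at `n = q^(m+1)` the term `j = 1` of the
recurrence has valuation exactly `q^(m+1) - 1 + q v_p(a_(q^m))`, because `a_(q^m)^q` is the only
term of `[T^(q^(m+1))] Ψ^q` on the vertex, while all terms `j ≥ 2` are strictly more divisible.
So the valuation polygon is the Legendre transform of the polygon with these vertices.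
-/

open Finset

def geomSum (q j : ℕ) : ℕ := ∑ k ∈ range j, q ^ k

namespace geomSum

variable {q : ℕ}

@[simp] lemma one (q : ℕ) : geomSum q 1 = 1 := by simp [geomSum]

lemma succ (q j : ℕ) : geomSum q (j + 1) = geomSum q j + q ^ j := sum_range_succ _ _

lemma add (q a b : ℕ) : geomSum q (a + b) = geomSum q a + q ^ a * geomSum q b := by
  simp only [geomSum, sum_range_add, pow_add, mul_sum]

lemma le_self (hq : 1 ≤ q) (j : ℕ) : j ≤ geomSum q j := by
  simpa [geomSum] using card_nsmul_le_sum (range j) (q ^ ·) 1 fun k _ ↦ Nat.one_le_pow k q hq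

lemma lt_self (hq : 2 ≤ q) {j : ℕ} (hj : 2 ≤ j) : j < geomSum q j := by
  obtain ⟨i, rfl⟩ := Nat.exists_eq_add_of_le' hj
  have := le_self (by omega : 1 ≤ q) (i + 1)
  have : 2 ≤ q ^ (i + 1) := le_trans hq (Nat.le_self_pow (by omega) q)
  rw [succ]
  omega

lemma le_mul_pow (hq : 1 ≤ q) (j : ℕ) : geomSum q j ≤ j * q ^ (j - 1) := by
  simpa [geomSum] using sum_le_card_nsmul (range j) (q ^ ·) (q ^ (j - 1))
    fun k hk ↦ Nat.pow_le_pow_right hq (by simp at hk; omega)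

lemma pow_sub_one_add_mul (hq : 1 ≤ q) (m : ℕ) :
    q ^ (m + 1) - 1 + q * ((m + 1) * q ^ m - geomSum q (m + 1))
      = (m + 2) * q ^ (m + 1) - geomSum q (m + 2) := by
  have hs : geomSum q (m + 2) = 1 + q * geomSum q (m + 1) := by
    rw [show m + 2 = 1 + (m + 1) by omega, add, one, pow_one]
  have hV := Nat.mul_le_mul_left q (by simpa using le_mul_pow hq (m + 1))
  have hpos := Nat.one_le_pow (m + 1) q hq
  rw [Nat.mul_sub, hs, pow_succ']
  rw [pow_succ'] at hpos
  rw [show q * ((m + 1) * q ^ m) = (m + 1) * (q * q ^ m) by ring] at hV ⊢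
  rw [show (m + 2) * (q * q ^ m) = (m + 1) * (q * q ^ m) + q * q ^ m by ring]
  omega

end geomSum

lemma pow_dvd_mul_of_le {R : Type*} [CommMonoid R] {π x y : R} {a b e : ℕ} (hx : π ^ a ∣ x)
    (hy : π ^ b ∣ y) (he : e ≤ a + b) : π ^ e ∣ x * y :=
  (pow_dvd_pow π he).trans (pow_add π a b ▸ mul_dvd_mul hx hy)

lemma emultiplicity_add_eq_of_pow_dvd {α : Type*} [Ring α] {p a b : α} {e : ℕ}
    (ha : p ^ (e + 1) ∣ a) (hb : emultiplicity p b = e) : emultiplicity p (a + b) = e := by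
  have hlt : emultiplicity p b < emultiplicity p a := by
    rw [hb]
    exact (ENat.natCast_lt_natCast.mpr e.lt_succ_self).trans_le (le_emultiplicity_of_pow_dvd ha)
  rw [emultiplicity_add_of_gt hlt, hb]

lemma padicValInt_eq_of_emultiplicity_eq {p : ℕ} (hp : p ≠ 1) {x : ℤ} {e : ℕ}
    (h : emultiplicity (p : ℤ) x = e) : padicValInt p x = e := by
  have hx : x ≠ 0 := by
    rintro rfl
    simp at h
  have := padicValNat_eq_emultiplicity_of_ne_one hp (Int.natAbs_ne_zero.mpr hx)
  rw [Int.emultiplicity_natAbs, h] at this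
  exact_mod_cast this

lemma valPolygon_eq_of_forall_le {p : ℕ} {Ψ : ℤ⟦X⟧} {μ L : ℝ}
    (hL : ∀ i, coeff i Ψ ≠ 0 → L ≤ padicValInt p (coeff i Ψ) + i * μ)
    {i₀ : ℕ} (h₀ : coeff i₀ Ψ ≠ 0) (hi₀ : padicValInt p (coeff i₀ Ψ) + i₀ * μ = L) :
    valPolygon p Ψ μ = L := by
  have : Nonempty {i // coeff i Ψ ≠ 0} := ⟨⟨i₀, h₀⟩⟩
  have hb : BddBelow (Set.range fun i : {i // coeff i Ψ ≠ 0} ↦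
      (padicValInt p (coeff i.1 Ψ) : ℝ) + i.1 * μ) :=
    ⟨L, Set.forall_mem_range.mpr fun i ↦ hL i.1 i.2⟩
  exact le_antisymm ((ciInf_le hb ⟨i₀, h₀⟩).trans hi₀.le) (le_ciInf fun i ↦ hL i.1 i.2)

namespace PowerSeries

section CommSemiring

variable {R : Type*} [CommSemiring R] {π : R}

lemma pow_dvd_coeff_pow_of_linear {φ : R⟦X⟧} (hφ : constantCoeff φ = 0) {A B N : ℕ}
    (hA : ∀ i ≤ N, π ^ (A * i - B) ∣ coeff i φ) {k : ℕ} (hk : 1 ≤ k) {n : ℕ}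
    (hn : n ≤ N + k - 1) : π ^ (A * n - k * B) ∣ coeff n (φ ^ k) := by
  induction k generalizing n with
  | zero => omega
  | succ k ih =>
    obtain rfl | hk := Nat.eq_zero_or_pos k
    · simpa using hA n (by omega)
    rw [pow_succ, coeff_mul]
    refine dvd_sum fun ⟨i, i'⟩ hii' ↦ ?_
    rw [HasAntidiagonal.mem_antidiagonal] at hii'
    obtain rfl | hi' := Nat.eq_zero_or_pos i'
    · simp [hφ]
    obtain hi | hi := Nat.lt_or_ge i k
    · simp [coeff_of_lt_order i ((Nat.cast_lt.mpr hi).trans_le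
        (le_order_pow_of_constantCoeff_eq_zero k hφ))]
    refine pow_dvd_mul_of_le (ih hk (n := i) (by omega)) (hA i' (by omega)) ?_
    have : A * i + A * i' = A * n := by rw [← mul_add, hii']
    rw [add_mul, one_mul]
    omega

variable {A B c : ℕ} {φ : R⟦X⟧}

-- `A * i + (c - i) - B` is the convex bound with slopes `A - 1`, `A` and vertex `(c, A * c - B)`.
lemma pow_dvd_coeff_pow_of_kink (hφ : ∀ i, π ^ (A * i + (c - i) - B) ∣ coeff i φ) (k n : ℕ) :
    π ^ (A * n + (k * c - n) - k * B) ∣ coeff n (φ ^ k) := by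
  induction k generalizing n with
  | zero => rcases n with _ | n <;> simp [coeff_one]
  | succ k ih =>
    rw [pow_succ, coeff_mul]
    refine dvd_sum fun ⟨i, i'⟩ hii' ↦ pow_dvd_mul_of_le (ih i) (hφ i') ?_
    rw [HasAntidiagonal.mem_antidiagonal] at hii'
    have : A * i + A * i' = A * n := by rw [← mul_add, hii']
    rw [add_mul, add_mul, one_mul, one_mul]
    omega

end CommSemiring

lemma emultiplicity_coeff_pow_of_kink {R : Type*} [CommRing R] [IsDomain R] {π : R}
    (hπ : Prime π) {A B c : ℕ} (hB : B ≤ A * c) {φ : R⟦X⟧}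
    (hφ : ∀ i, π ^ (A * i + (c - i) - B) ∣ coeff i φ)
    (hc : emultiplicity π (coeff c φ) = ↑(A * c - B)) (k : ℕ) :
    emultiplicity π (coeff (k * c) (φ ^ k)) = ↑(k * (A * c - B)) := by
  induction k with
  | zero => simp [emultiplicity_of_one_right hπ.not_isUnit]
  | succ k ih =>
    have hmem : (k * c, c) ∈ antidiagonal ((k + 1) * c) := by simp [add_mul]
    rw [pow_succ, coeff_mul, ← sum_erase_add _ _ hmem]
    -- `[X^(k c)] φ^k * [X^c] φ` is the only term of the product on the vertex.
    refine emultiplicity_add_eq_of_pow_dvd (dvd_sum fun ⟨i, i'⟩ hii' ↦ ?_)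
      (by rw [emultiplicity_mul hπ, ih, hc]; push_cast; ring)
    obtain ⟨hne, hii'⟩ := mem_erase.mp hii'
    rw [HasAntidiagonal.mem_antidiagonal] at hii'
    refine pow_dvd_mul_of_le (pow_dvd_coeff_pow_of_kink hφ k i) (hφ i') ?_
    have hne : i ≠ k * c ∨ i' ≠ c := by
      by_contra! h
      exact hne (Prod.ext h.1 h.2)
    have hA : A * i + A * i' = k * (A * c) + A * c := by rw [← mul_add, hii']; ring
    have hkV : k * (A * c - B) = k * (A * c) - k * B := Nat.mul_sub k (A * c) B
    have hkB : k * B ≤ k * (A * c) := Nat.mul_le_mul_left k hB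
    rw [add_mul, one_mul] at hii' ⊢
    omega

end PowerSeries

namespace IsPsi

variable {p q : ℕ} {Ψ : ℤ⟦X⟧}

lemma coeff_eq_neg_sum (hΨ : IsPsi p q Ψ) (hp : p ≠ 0) {n : ℕ} (hn : 2 ≤ n) :
    coeff n Ψ = -∑ j ∈ range n, (p : ℤ) ^ ((j + 1) * (n - 1)) * coeff n (Ψ ^ q ^ (j + 1)) := by
  have hterm : ∀ j : ℕ, ((p : ℚ) ^ j)⁻¹ *
      coeff n ((rescale ((p : ℚ) ^ j) (Ψ.map (Int.castRingHom ℚ))) ^ q ^ j)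
      = (((p : ℤ) ^ (j * (n - 1)) * coeff n (Ψ ^ q ^ j) : ℤ) : ℚ) := by
    intro j
    rw [← map_pow, coeff_rescale, ← map_pow, coeff_map, ← pow_mul,
      show j * n = j + j * (n - 1) by rw [← mul_one_add]; congr; omega, pow_add]
    simp only [eq_intCast]
    push_cast
    field_simp
  have h := hΨ.2.2 n
  simp only [hterm, coeff_X, show n ≠ 1 by omega, if_false] at h
  have h' : ∑ j ∈ range (n + 1), (p : ℤ) ^ (j * (n - 1)) * coeff n (Ψ ^ q ^ j) = 0 := by
    exact_mod_cast h
  rw [sum_range_succ'] at h'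
  simp only [zero_mul, pow_zero, pow_one, one_mul] at h'
  omega

-- The exponent is `(k n - s_k) + (s_j - j)`, and the surplus `s_j - j` is positive for `j ≥ 2`.
lemma pow_dvd_recurrence_term (hΨ : IsPsi p q Ψ) (hq : 2 ≤ q) {n j k : ℕ} (hn : 1 ≤ n)
    (hj : 1 ≤ j) (hjk : j < k)
    (hlow : ∀ i < n, (p : ℤ) ^ ((k - j) * i - geomSum q (k - j)) ∣ coeff i Ψ) :
    (p : ℤ) ^ (k * n + geomSum q j - (geomSum q k + j)) ∣
      (p : ℤ) ^ (j * (n - 1)) * coeff n (Ψ ^ q ^ j) := by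
  have hqj : 2 ≤ q ^ j := hq.trans (Nat.le_self_pow (by omega) q)
  have hpow := pow_dvd_coeff_pow_of_linear hΨ.1 (N := n - 1) (fun i hi ↦ hlow i (by omega))
    (k := q ^ j) (by omega) (n := n) (by omega)
  refine pow_dvd_mul_of_le dvd_rfl hpow ?_
  have hk : geomSum q k = geomSum q j + q ^ j * geomSum q (k - j) := by
    rw [← geomSum.add]; congr; omega
  have hkn : k * n = j * n + (k - j) * n := by rw [← add_mul]; congr; omega
  have hjn : j * (n - 1) + j = j * n := by rw [← mul_add_one]; congr; omega
  omega

theorem pow_dvd_coeff (hΨ : IsPsi p q Ψ) (hp : p ≠ 0) (hq : 2 ≤ q) (k n : ℕ) :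
    (p : ℤ) ^ (k * n - geomSum q k) ∣ coeff n Ψ := by
  induction n using Nat.strong_induction_on generalizing k with
  | _ n ih =>
    have hk := geomSum.le_self (by omega : 1 ≤ q) k
    match n with
    | 0 => simp [hΨ.1]
    | 1 => simp [hΨ.2.1, Nat.sub_eq_zero_of_le hk]
    | n + 2 =>
      rw [hΨ.coeff_eq_neg_sum hp (by omega), dvd_neg]
      refine dvd_sum fun j _ ↦ ?_
      obtain hjk | hjk := Nat.lt_or_ge (j + 1) k
      · have hj := geomSum.le_self (by omega : 1 ≤ q) (j + 1)
        exact (pow_dvd_pow _ (by omega)).trans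
          (hΨ.pow_dvd_recurrence_term hq (by omega) (by omega) hjk fun i hi ↦ ih i hi _)
      · refine dvd_mul_of_dvd_left (pow_dvd_pow _ ?_) _
        have := Nat.mul_le_mul_right (n + 1) hjk
        rw [show n + 2 - 1 = n + 1 by omega, show k * (n + 2) = k * (n + 1) + k by ring]
        omega

lemma pow_dvd_coeff_kink (hΨ : IsPsi p q Ψ) (hp : p ≠ 0) (hq : 2 ≤ q) (m i : ℕ) :
    (p : ℤ) ^ ((m + 1) * i + (q ^ m - i) - geomSum q (m + 1)) ∣ coeff i Ψ := by
  obtain hi | hi := le_or_gt (q ^ m) i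
  · rw [show q ^ m - i = 0 by omega, add_zero]
    exact hΨ.pow_dvd_coeff hp hq (m + 1) i
  · convert hΨ.pow_dvd_coeff hp hq m i using 2
    rw [geomSum.succ, add_one_mul]
    omega

lemma pow_succ_dvd_recurrence_term (hΨ : IsPsi p q Ψ) (hp : p ≠ 0) (hq : 2 ≤ q) {n j k : ℕ}
    (hj : 2 ≤ j) (hk : 2 ≤ k) (hkn : geomSum q k ≤ k * n) :
    (p : ℤ) ^ (k * n - geomSum q k + 1) ∣ (p : ℤ) ^ (j * (n - 1)) * coeff n (Ψ ^ q ^ j) := by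
  have hsj := geomSum.lt_self hq hj
  have hsk := geomSum.lt_self hq hk
  have hn : 1 ≤ n := Nat.pos_of_ne_zero (by rintro rfl; omega)
  obtain hjk | hjk := Nat.lt_or_ge j k
  · exact (pow_dvd_pow _ (by omega)).trans (hΨ.pow_dvd_recurrence_term hq hn (by omega) hjk
      fun i _ ↦ hΨ.pow_dvd_coeff hp hq _ i)
  · refine dvd_mul_of_dvd_left (pow_dvd_pow _ ?_) _
    have := Nat.mul_le_mul_right (n - 1) hjk
    have : k * (n - 1) + k = k * n := by rw [← mul_add_one]; congr; omega
    omega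

theorem emultiplicity_coeff_q_pow (hΨ : IsPsi p q Ψ) (hp : p.Prime) (hq : 2 ≤ q) (m : ℕ) :
    emultiplicity (p : ℤ) (coeff (q ^ m) Ψ) = ↑((m + 1) * q ^ m - geomSum q (m + 1)) := by
  have hq1 : 1 ≤ q := by omega
  have hpZ : Prime (p : ℤ) := Nat.prime_iff_prime_int.mp hp
  induction m with
  | zero => simp [hΨ.2.1, emultiplicity_of_one_right hpZ.not_isUnit]
  | succ m ih =>
    have hn : 2 ≤ q ^ (m + 1) := hq.trans (Nat.le_self_pow (by omega) q)
    have hV : geomSum q (m + 1) ≤ (m + 1) * q ^ m := by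
      simpa using geomSum.le_mul_pow hq1 (m + 1)
    rw [hΨ.coeff_eq_neg_sum hp.ne_zero hn, emultiplicity_neg,
      ← sum_erase_add _ _ (mem_range.mpr (by omega : 0 < q ^ (m + 1)))]
    refine emultiplicity_add_eq_of_pow_dvd (dvd_sum fun j hj ↦ ?_) ?_
    · have := (mem_erase.mp hj).1
      exact hΨ.pow_succ_dvd_recurrence_term hp.ne_zero hq (by omega) (by omega)
        (geomSum.le_mul_pow hq1 (m + 2))
    · rw [zero_add, one_mul, pow_one, emultiplicity_mul hpZ,
        emultiplicity_pow_self_of_prime hpZ, pow_succ' q m,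
        emultiplicity_coeff_pow_of_kink hpZ hV (hΨ.pow_dvd_coeff_kink hp.ne_zero hq m) ih,
        ← Nat.cast_add, ← pow_succ', geomSum.pow_sub_one_add_mul hq1]

lemma one_le_of_coeff_ne_zero (hΨ : IsPsi p q Ψ) {i : ℕ} (hi : coeff i Ψ ≠ 0) : 1 ≤ i := by
  rw [Nat.one_le_iff_ne_zero]
  rintro rfl
  exact hi (by simpa using hΨ.1)

lemma padicValInt_coeff_q_pow (hΨ : IsPsi p q Ψ) (hp : p.Prime) (hq : 2 ≤ q) (m : ℕ) :
    padicValInt p (coeff (q ^ m) Ψ) = (m + 1) * q ^ m - geomSum q (m + 1) :=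
  padicValInt_eq_of_emultiplicity_eq hp.ne_one (hΨ.emultiplicity_coeff_q_pow hp hq m)

lemma le_padicValInt_add_mul (hΨ : IsPsi p q Ψ) (hp : 1 < p) (hq : 2 ≤ q) {i : ℕ}
    (hi : coeff i Ψ ≠ 0) (k c : ℕ) (μ : ℝ) (h : 0 ≤ ((i : ℝ) - c) * (μ + k)) :
    c * (μ + k) - geomSum q k ≤ padicValInt p (coeff i Ψ) + i * μ := by
  have hv := ((padicValInt_dvd_iff_of_ne_one hp.ne' _ _).mp
    (hΨ.pow_dvd_coeff (by omega) hq k i)).resolve_left hi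
  have : (k : ℝ) * i - geomSum q k ≤ padicValInt p (coeff i Ψ) := by
    rw [sub_le_iff_le_add]
    exact_mod_cast Nat.sub_le_iff_le_add.mp hv
  nlinarith

theorem valPolygon_eq_of_neg_one_le (hΨ : IsPsi p q Ψ) (hp : 1 < p) (hq : 2 ≤ q) {μ : ℝ}
    (hμ : -1 ≤ μ) : valPolygon p Ψ μ = μ := by
  refine valPolygon_eq_of_forall_le (fun i hi ↦ ?_) (i₀ := 1) (by simp [hΨ.2.1])
    (by simp [hΨ.2.1])
  have hi1 : (1 : ℝ) ≤ i := by exact_mod_cast hΨ.one_le_of_coeff_ne_zero hi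
  have := hΨ.le_padicValInt_add_mul hp hq hi 1 1 μ
    (by push_cast; exact mul_nonneg (by linarith) (by linarith))
  push_cast [geomSum.one] at this
  linarith

theorem valPolygon_eq_of_mem_Icc (hΨ : IsPsi p q Ψ) (hp : p.Prime) (hq : 2 ≤ q) (m : ℕ) {μ : ℝ}
    (hμ : μ ∈ Set.Icc (-(m + 1 : ℝ)) (-m)) :
    valPolygon p Ψ μ = q ^ m * (μ + m) - geomSum q m := by
  obtain ⟨hμ₁, hμ₂⟩ := hμ
  have hs : (geomSum q (m + 1) : ℝ) = geomSum q m + q ^ m := by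
    rw [geomSum.succ]; push_cast; ring
  have hne : coeff (q ^ m) Ψ ≠ 0 := by
    intro h
    have := hΨ.emultiplicity_coeff_q_pow hp hq m
    rw [h, emultiplicity_zero] at this
    exact ENat.top_ne_natCast _ this
  refine valPolygon_eq_of_forall_le (fun i hi ↦ ?_) hne ?_
  · obtain hc | hc := le_total (q ^ m) i
    · have hc : (q : ℝ) ^ m ≤ i := by exact_mod_cast hc
      have := hΨ.le_padicValInt_add_mul hp.one_lt hq hi (m + 1) (q ^ m) μ
        (by push_cast; exact mul_nonneg (by linarith) (by linarith))
      push_cast at this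
      linarith
    · have hc : (i : ℝ) ≤ q ^ m := by exact_mod_cast hc
      have := hΨ.le_padicValInt_add_mul hp.one_lt hq hi m (q ^ m) μ
        (mul_nonneg_of_nonpos_of_nonpos (by push_cast; linarith) (by linarith))
      push_cast at this
      linarith
  · have hV : geomSum q (m + 1) ≤ (m + 1) * q ^ m := by
      simpa using geomSum.le_mul_pow (by omega) (m + 1)
    rw [hΨ.padicValInt_coeff_q_pow hp hq m, Nat.cast_sub hV]
    push_cast
    rw [hs]
    ring

end IsPsi

/-- the valuation polygon of `Ψ_q`: `v(Ψ_q, μ) = μ` for `μ ≥ -1`, and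
`v(Ψ_q, μ) = q^{j-1}(μ + j - 1) - (q^{j-2} + ⋯ + q + 1)` for `-j ≤ μ ≤ 1-j`, `j ≥ 1`. -/
theorem psi_valuation_polygon (p f : ℕ) (hp : p.Prime) (hf : 0 < f)
    (q : ℕ) (hq : q = p ^ f)
    (Ψ : PowerSeries ℤ) (hΨ : IsPsi p q Ψ) :
    (∀ μ : ℝ, -1 ≤ μ → valPolygon p Ψ μ = μ) ∧
    (∀ j : ℕ, 1 ≤ j → ∀ μ : ℝ, -(j : ℝ) ≤ μ → μ ≤ 1 - (j : ℝ) →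
      valPolygon p Ψ μ
        = (q : ℝ) ^ (j - 1) * (μ + (j : ℝ) - 1) - ∑ k ∈ Finset.range (j - 1), (q : ℝ) ^ k) := by
  have hq2 : 2 ≤ q := hq ▸ hp.two_le.trans (Nat.le_self_pow hf.ne' p)
  refine ⟨fun μ hμ ↦ hΨ.valPolygon_eq_of_neg_one_le hp.one_lt hq2 hμ, fun j hj μ hμ₁ hμ₂ ↦ ?_⟩
  obtain ⟨m, rfl⟩ := Nat.exists_eq_add_of_le' hj
  push_cast at hμ₁ hμ₂
  rw [hΨ.valPolygon_eq_of_mem_Icc hp hq2 m ⟨by linarith, by linarith⟩, geomSum]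
  push_cast
  ring
end

section
/- Ψ_q restricts to a bijective (bianalytic) map from the open disc {x ∈ ℂ_p : v_p(x) > −1} onto itself. -/
/-!
Write `Ψ = ∑ cₙ Tⁿ`. For `n ≥ 2` the coefficient of `Tⁿ` in the functional equation reads
`cₙ + ∑_{j ≥ 1} p^{j(n-1)} [Tⁿ] Ψ^{q^j} = 0`, so `p^{n-1} ∣ cₙ` and `‖cₙ‖ ≤ p^{1-n}` in `K`.
Hence on the disc `‖x‖ < p` we have `Ψ(x) = x + h(x)` with `h 0 = 0` and
`‖h x - h y‖ ≤ (max ‖x‖ ‖y‖ / p) ‖x - y‖`. In an ultrametric field such a perturbation of the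
identity preserves norms and is injective on the disc, and it is onto: `y` is hit by the fixed
point of the contraction `z ↦ y - h z` of the closed ball of radius `‖y‖`.
-/

open PowerSeries

lemma coeff_rescale_map_pow {F : Type*} [Field F] (a : F) (φ : ℤ⟦X⟧) (k n : ℕ) :
    coeff n (rescale a (φ.map (Int.castRingHom F)) ^ k) =
      a ^ n * ((coeff n (φ ^ k) : ℤ) : F) := by
  rw [← map_pow, ← map_pow, coeff_rescale, coeff_map, eq_intCast]

namespace IsPsi

variable {p q : ℕ} {Ψ : ℤ⟦X⟧}

lemma coeff_zero (hΨ : IsPsi p q Ψ) : coeff 0 Ψ = 0 := by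
  rw [coeff_zero_eq_constantCoeff_apply, hΨ.1]

theorem pow_dvd_coeff_s15 (hΨ : IsPsi p q Ψ) (m : ℕ) : (p : ℤ) ^ (m + 1) ∣ coeff (m + 2) Ψ := by
  have hsum : ∑ j ∈ Finset.range (m + 3),
      ((p : ℤ) ^ j) ^ (m + 1) * coeff (m + 2) (Ψ ^ q ^ j) = 0 := by
    have h := hΨ.2.2 (m + 2)
    have hcancel (a : ℚ) : a⁻¹ * a ^ (m + 2) = a ^ (m + 1) := by
      rw [pow_succ', pow_succ', ← mul_assoc, ← mul_assoc, inv_mul_mul_self]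
    simp only [coeff_rescale_map_pow, ← mul_assoc, hcancel, coeff_X,
      if_neg (by omega : m + 2 ≠ 1)] at h
    exact_mod_cast h
  rw [Finset.sum_range_succ'] at hsum
  simp only [pow_zero, one_pow, one_mul, pow_one] at hsum
  have htail : (p : ℤ) ^ (m + 1) ∣ ∑ j ∈ Finset.range (m + 2),
      ((p : ℤ) ^ (j + 1)) ^ (m + 1) * coeff (m + 2) (Ψ ^ q ^ (j + 1)) :=
    Finset.dvd_sum fun j _ ↦ (pow_dvd_pow_of_dvd (dvd_pow_self _ j.succ_ne_zero) _).mul_right _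
  exact (dvd_add_right htail).mp (hsum ▸ dvd_zero _)

lemma norm_coeff_le {K : Type*} [NormedField K] [IsUltrametricDist K] (hΨ : IsPsi p q Ψ)
    (hpK : ‖(p : K)‖ = (p : ℝ)⁻¹) (m : ℕ) :
    ‖((coeff (m + 2) Ψ : ℤ) : K)‖ ≤ (p : ℝ)⁻¹ ^ (m + 1) := by
  obtain ⟨e, he⟩ := hΨ.pow_dvd_coeff_s15 m
  rw [he, Int.cast_mul, Int.cast_pow, Int.cast_natCast, norm_mul, norm_pow, hpK]
  exact mul_le_of_le_one_right (by positivity) (IsUltrametricDist.norm_intCast_le_one K e)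

end IsPsi

section PerturbationOfIdentity

open Metric Set

variable {E : Type*} [NormedAddCommGroup E] {T : E → E} {ρ : ℝ}

lemma norm_le_of_forall_norm_sub_le (hT0 : T 0 = 0)
    (hT : ∀ x y, ‖x‖ < ρ → ‖y‖ < ρ → ‖T x - T y‖ ≤ max ‖x‖ ‖y‖ / ρ * ‖x - y‖)
    {x : E} (hx : ‖x‖ < ρ) : ‖T x‖ ≤ ‖x‖ / ρ * ‖x‖ := by
  simpa [hT0] using hT x 0 hx (by simpa using (norm_nonneg x).trans_lt hx)

lemma norm_add_eq_of_forall_norm_sub_le [IsUltrametricDist E] (hT0 : T 0 = 0)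
    (hT : ∀ x y, ‖x‖ < ρ → ‖y‖ < ρ → ‖T x - T y‖ ≤ max ‖x‖ ‖y‖ / ρ * ‖x - y‖)
    {x : E} (hx : ‖x‖ < ρ) : ‖x + T x‖ = ‖x‖ := by
  rcases eq_or_ne x 0 with rfl | hx0
  · simp [hT0]
  have hρ : 0 < ρ := (norm_nonneg x).trans_lt hx
  have hlt : ‖T x‖ < ‖x‖ := calc
    ‖T x‖ ≤ ‖x‖ / ρ * ‖x‖ := norm_le_of_forall_norm_sub_le hT0 hT hx
    _ < 1 * ‖x‖ := by gcongr; exact (div_lt_one hρ).mpr hx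
    _ = ‖x‖ := one_mul _
  rw [IsUltrametricDist.norm_add_eq_max_of_norm_ne_norm hlt.ne', max_eq_left hlt.le]

lemma injOn_add_of_forall_norm_sub_le
    (hT : ∀ x y, ‖x‖ < ρ → ‖y‖ < ρ → ‖T x - T y‖ ≤ max ‖x‖ ‖y‖ / ρ * ‖x - y‖) :
    InjOn (fun x ↦ x + T x) (ball 0 ρ) := by
  intro x hx y hy hxy
  rw [mem_ball_zero_iff] at hx hy
  have hρ : 0 < ρ := (norm_nonneg x).trans_lt hx
  by_contra hne
  have hpos : 0 < ‖x - y‖ := norm_pos_iff.mpr (sub_ne_zero.mpr hne)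
  have hsub : x - y = T y - T x := sub_eq_sub_iff_add_eq_add.mpr (hxy.trans (add_comm _ _))
  have := calc
    ‖x - y‖ = ‖T y - T x‖ := by rw [hsub]
    _ ≤ max ‖y‖ ‖x‖ / ρ * ‖y - x‖ := hT y x hy hx
    _ < 1 * ‖x - y‖ := by
        rw [norm_sub_rev]; gcongr; exact (div_lt_one hρ).mpr (max_lt hy hx)
  linarith

lemma surjOn_add_of_forall_norm_sub_le [IsUltrametricDist E] [CompleteSpace E] (hT0 : T 0 = 0)
    (hT : ∀ x y, ‖x‖ < ρ → ‖y‖ < ρ → ‖T x - T y‖ ≤ max ‖x‖ ‖y‖ / ρ * ‖x - y‖) :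
    SurjOn (fun x ↦ x + T x) (ball 0 ρ) (ball 0 ρ) := by
  intro y hy
  rw [mem_ball_zero_iff] at hy
  have hρ : 0 < ρ := (norm_nonneg y).trans_lt hy
  set r := ‖y‖
  have hrρ : r / ρ < 1 := (div_lt_one hρ).mpr hy
  have hmaps : MapsTo (fun z ↦ y - T z) (closedBall 0 r) (closedBall 0 r) := by
    intro z hz
    rw [mem_closedBall_zero_iff] at hz ⊢
    have hzρ : ‖z‖ < ρ := hz.trans_lt hy
    have hTz : ‖T z‖ ≤ r := calc
      ‖T z‖ ≤ ‖z‖ / ρ * ‖z‖ := norm_le_of_forall_norm_sub_le hT0 hT hzρ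
      _ ≤ 1 * r := by gcongr; exact ((div_lt_one hρ).mpr hzρ).le
      _ = r := one_mul r
    have hsub := IsUltrametricDist.norm_add_le_max y (-T z)
    rw [norm_neg, ← sub_eq_add_neg] at hsub
    exact hsub.trans (max_le le_rfl hTz)
  have hlip : LipschitzOnWith (r / ρ).toNNReal (fun z ↦ y - T z) (closedBall 0 r) := by
    refine LipschitzOnWith.of_dist_le' fun a ha b hb ↦ ?_
    rw [mem_closedBall_zero_iff] at ha hb
    rw [dist_eq_norm, dist_eq_norm, sub_sub_sub_cancel_left, norm_sub_rev a]
    calc ‖T b - T a‖ ≤ max ‖b‖ ‖a‖ / ρ * ‖b - a‖ := hT b a (hb.trans_lt hy) (ha.trans_lt hy)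
      _ ≤ r / ρ * ‖b - a‖ := by gcongr; exact max_le hb ha
  have hcontr : ContractingWith (r / ρ).toNNReal (hmaps.restrict _ _ _) :=
    ⟨Real.toNNReal_lt_one.mpr hrρ, hlip.mapsToRestrict hmaps⟩
  obtain ⟨z, hz, hfix, -⟩ := hcontr.exists_fixedPoint' isClosed_closedBall.isComplete hmaps
    (mem_closedBall_self (norm_nonneg y)) (edist_ne_top _ _)
  refine ⟨z, mem_ball_zero_iff.mpr ((mem_closedBall_zero_iff.mp hz).trans_lt hy), ?_⟩
  exact eq_sub_iff_add_eq.mp (hfix : y - T z = z).symm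

theorem bijOn_ball_add_of_forall_norm_sub_le [IsUltrametricDist E] [CompleteSpace E]
    (hT0 : T 0 = 0)
    (hT : ∀ x y, ‖x‖ < ρ → ‖y‖ < ρ → ‖T x - T y‖ ≤ max ‖x‖ ‖y‖ / ρ * ‖x - y‖) :
    BijOn (fun x ↦ x + T x) (ball 0 ρ) (ball 0 ρ) := by
  refine ⟨fun x hx ↦ ?_, injOn_add_of_forall_norm_sub_le hT,
    surjOn_add_of_forall_norm_sub_le hT0 hT⟩
  rw [mem_ball_zero_iff] at hx ⊢
  rwa [norm_add_eq_of_forall_norm_sub_le hT0 hT hx]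

end PerturbationOfIdentity

section PowerSeriesTail

open Metric Set

variable {K : Type*} [NormedField K] {a : ℕ → K} {ρ : ℝ}

lemma norm_pow_sub_pow_le [IsUltrametricDist K] {x y : K} {r : ℝ} (hx : ‖x‖ ≤ r)
    (hy : ‖y‖ ≤ r) (n : ℕ) :
    ‖x ^ (n + 1) - y ^ (n + 1)‖ ≤ r ^ n * ‖x - y‖ := by
  have hr : 0 ≤ r := (norm_nonneg x).trans hx
  rw [← geom_sum₂_mul, norm_mul]
  gcongr
  refine IsUltrametricDist.norm_sum_le_of_forall_le_of_nonneg (by positivity) fun i hi ↦ ?_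
  have hi : i ≤ n := Nat.lt_succ_iff.mp (Finset.mem_range.mp hi)
  calc ‖x ^ i * y ^ (n + 1 - 1 - i)‖ = ‖x‖ ^ i * ‖y‖ ^ (n - i) := by simp
    _ ≤ r ^ i * r ^ (n - i) := by gcongr
    _ = r ^ n := by rw [← pow_add, Nat.add_sub_cancel' hi]

noncomputable def tailSum (a : ℕ → K) (x : K) : K := ∑' n, a (n + 2) * x ^ (n + 2)

lemma summable_tail [CompleteSpace K] (ha : ∀ n, ‖a (n + 2)‖ ≤ ρ⁻¹ ^ (n + 1)) {x : K}
    (hx : ‖x‖ < ρ) : Summable fun n ↦ a (n + 2) * x ^ (n + 2) := by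
  have hρ : 0 < ρ := (norm_nonneg x).trans_lt hx
  have hgeom := summable_geometric_of_lt_one (by positivity) ((div_lt_one hρ).mpr hx)
  refine .of_norm_bounded (hgeom.mul_left (‖x‖ * (‖x‖ / ρ))) fun n ↦ ?_
  calc ‖a (n + 2) * x ^ (n + 2)‖ = ‖a (n + 2)‖ * ‖x‖ ^ (n + 2) := by rw [norm_mul, norm_pow]
    _ ≤ ρ⁻¹ ^ (n + 1) * ‖x‖ ^ (n + 2) := by gcongr; exact ha n
    _ = ‖x‖ * (‖x‖ / ρ) * (‖x‖ / ρ) ^ n := by rw [div_eq_mul_inv]; ring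

lemma norm_tailSum_sub_le [IsUltrametricDist K] [CompleteSpace K]
    (ha : ∀ n, ‖a (n + 2)‖ ≤ ρ⁻¹ ^ (n + 1)) {x y : K} (hx : ‖x‖ < ρ) (hy : ‖y‖ < ρ) :
    ‖tailSum a x - tailSum a y‖ ≤ max ‖x‖ ‖y‖ / ρ * ‖x - y‖ := by
  set r := max ‖x‖ ‖y‖
  have hρ : 0 < ρ := (norm_nonneg x).trans_lt hx
  have hr : r / ρ < 1 := (div_lt_one hρ).mpr (max_lt hx hy)
  rw [tailSum, tailSum, ← (summable_tail ha hx).tsum_sub (summable_tail ha hy)]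
  refine IsUltrametricDist.norm_tsum_le_of_forall_le_of_nonneg (by positivity) fun n ↦ ?_
  calc ‖a (n + 2) * x ^ (n + 2) - a (n + 2) * y ^ (n + 2)‖
      = ‖a (n + 2)‖ * ‖x ^ (n + 1 + 1) - y ^ (n + 1 + 1)‖ := by rw [← mul_sub, norm_mul]
    _ ≤ ρ⁻¹ ^ (n + 1) * (r ^ (n + 1) * ‖x - y‖) := by
        gcongr
        exacts [ha n, norm_pow_sub_pow_le (le_max_left _ _) (le_max_right _ _) _]
    _ = (r / ρ) ^ (n + 1) * ‖x - y‖ := by rw [div_eq_mul_inv, mul_pow]; ring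
    _ ≤ r / ρ * ‖x - y‖ := by gcongr; exact pow_le_of_le_one (by positivity) hr.le n.succ_ne_zero

lemma tsum_mul_pow_eq_add_tailSum [CompleteSpace K] (h0 : a 0 = 0) (h1 : a 1 = 1)
    (ha : ∀ n, ‖a (n + 2)‖ ≤ ρ⁻¹ ^ (n + 1)) {x : K} (hx : ‖x‖ < ρ) :
    ∑' i, a i * x ^ i = x + tailSum a x := by
  have hs₁ : Summable fun n ↦ a (n + 1) * x ^ (n + 1) :=
    (summable_nat_add_iff 1).mp (summable_tail ha hx)
  have hs₀ : Summable fun n ↦ a n * x ^ n := (summable_nat_add_iff 1).mp hs₁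
  rw [hs₀.tsum_eq_zero_add, hs₁.tsum_eq_zero_add]
  simp only [tailSum, h0, h1, zero_mul, zero_add, one_mul, pow_one]

theorem bijOn_ball_tsum_mul_pow [IsUltrametricDist K] [CompleteSpace K] (h0 : a 0 = 0)
    (h1 : a 1 = 1) (ha : ∀ n, ‖a (n + 2)‖ ≤ ρ⁻¹ ^ (n + 1)) :
    BijOn (fun x ↦ ∑' i, a i * x ^ i) (ball 0 ρ) (ball 0 ρ) := by
  have hT0 : tailSum a 0 = 0 := by simp [tailSum]
  refine (bijOn_ball_add_of_forall_norm_sub_le hT0 fun x y ↦ norm_tailSum_sub_le ha).congr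
    fun x hx ↦ (tsum_mul_pow_eq_add_tailSum h0 h1 ha (mem_ball_zero_iff.mp hx)).symm

end PowerSeriesTail

/-- `ℂ_p` is modelled as a complete nonarchimedean normed field `K` with `‖p‖ = p⁻¹`, in which
the disc `v_p(x) > -1` is `‖x‖ < p`. -/
theorem psi_bijective_on_disc_general (p : ℕ)
    (q : ℕ)
    (Ψ : PowerSeries ℤ) (hΨ : IsPsi p q Ψ)
    (K : Type) [NormedField K] [CompleteSpace K]
    (hna : IsUltrametricDist K) (hpK : ‖(p : K)‖ = (p : ℝ)⁻¹) :
    Set.BijOn (psiEval Ψ) {x : K | ‖x‖ < (p : ℝ)} {x : K | ‖x‖ < (p : ℝ)} := by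
  rw [← ball_zero_eq]
  exact bijOn_ball_tsum_mul_pow (by simp [hΨ.coeff_zero]) (by simp [hΨ.2.1])
    (hΨ.norm_coeff_le hpK)

/-- `Ψ_q` restricts to a bijection of the open disc
`{x ∈ ℂ_p : v_p(x) > -1} = {x : ‖x‖ < p}` onto itself. Here `ℂ_p` is modelled as a
complete algebraically closed nonarchimedean normed field `K` with `‖p‖ = p⁻¹`. -/
theorem psi_bijective_on_disc (p f : ℕ) (hp : p.Prime) (hf : 0 < f)
    (q : ℕ) (hq : q = p ^ f)
    (Ψ : PowerSeries ℤ) (hΨ : IsPsi p q Ψ)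
    (K : Type) [NormedField K] [CompleteSpace K] [IsAlgClosed K]
    (hna : IsUltrametricDist K) (hpK : ‖(p : K)‖ = (p : ℝ)⁻¹) :
    Set.BijOn (psiEval Ψ) {x : K | ‖x‖ < (p : ℝ)} {x : K | ‖x‖ < (p : ℝ)} :=
  psi_bijective_on_disc_general p q Ψ hΨ K hna hpK
end

section
/- The inverse power series β_q ∈ T + T²ℤ[[T]] of Ψ_q (i.e., Ψ_q(β_q(T)) = T = β_q(Ψ_q(T)) in ℤ[[T]]) has exact disc of convergence {T ∈ ℂ_p : v_p(T) > −1}: it converges for v_p(T) > −1 and diverges for some T with v_p(T) = −1. -/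
/-!
Put `A(T) = p Ψ(T/p)` and `B(T) = p β(T/p)`. The defining equation of `Ψ` shows, by induction on
the degree, that `A` has integral coefficients and `A ≡ T - T^q (mod p)`. Reading `Ψ(β(T)) = T`
degree by degree, the same then holds for `B`, which reduces to the compositional inverse of
`T - T^q` over `𝔽_p`; as the `q`-th power is additive there, that inverse is `∑ₑ T^(qᵉ)`.
Hence `v_p(b_n) ≥ n - 1`, with equality when `n` is a power of `q`: the series converges for
`v_p(T) > -1`, while at `T = 1/p` all terms of index `qᴺ` have absolute value `p`.
-/

open PowerSeries

/-- `β` is the compositional inverse of `Ψ` in `T + T²ℤ[[T]]`: `Ψ(β(T)) = T = β(Ψ(T))`,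
expressed coefficientwise (both series have zero constant term, so only the terms with
`i ≤ n` contribute to the `n`-th coefficient of the composition). -/
def IsCompInv (Ψ β : PowerSeries ℤ) : Prop :=
  PowerSeries.constantCoeff β = 0 ∧ PowerSeries.coeff 1 β = 1 ∧
  (∀ n : ℕ, (∑ i ∈ Finset.range (n + 1),
      PowerSeries.coeff i Ψ * PowerSeries.coeff n (β ^ i))
    = PowerSeries.coeff n (PowerSeries.X : PowerSeries ℤ)) ∧
  (∀ n : ℕ, (∑ i ∈ Finset.range (n + 1),
      PowerSeries.coeff i β * PowerSeries.coeff n (Ψ ^ i))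
    = PowerSeries.coeff n (PowerSeries.X : PowerSeries ℤ))

open Finset

section Divisibility

variable {R : Type*} [CommRing R]

theorem pow_add_add_one_dvd_mul_sub {c x y a b : R} {m k : ℕ}
    (hx : c ^ (m + 1) ∣ x - a * c ^ m) (hy : c ^ (k + 1) ∣ y - b * c ^ k) :
    c ^ (m + k + 1) ∣ x * y - a * b * c ^ (m + k) := by
  obtain ⟨u, hu⟩ := hx
  obtain ⟨v, hv⟩ := hy
  exact ⟨a * v + u * (b + c * v),
    by linear_combination y * hu + (a * c ^ m + c ^ (m + 1) * u) * hv⟩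

theorem pow_sum_add_one_dvd_prod_sub {ι : Type*} (c : R) (s : Finset ι) (m : ι → ℕ)
    (x a : ι → R) (h : ∀ i ∈ s, c ^ (m i + 1) ∣ x i - a i * c ^ m i) :
    c ^ (∑ i ∈ s, m i + 1) ∣ ∏ i ∈ s, x i - (∏ i ∈ s, a i) * c ^ ∑ i ∈ s, m i := by
  induction s using Finset.cons_induction with
  | empty => simp
  | cons i s hi ih =>
    rw [prod_cons, prod_cons, sum_cons]
    exact pow_add_add_one_dvd_mul_sub (h i (mem_cons_self i s))
      (ih fun j hj => h j (mem_cons_of_mem hj))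

end Divisibility

theorem Nat.exists_eq_pow_iff_dvd_and {q n : ℕ} (hn : n ≠ 1) :
    (∃ e, n = q ^ e) ↔ q ∣ n ∧ ∃ e, n / q = q ^ e := by
  constructor
  · rintro ⟨_ | e, rfl⟩
    · exact absurd (pow_zero q) hn
    · rcases Nat.eq_zero_or_pos q with rfl | hq
      · exact ⟨dvd_pow_self 0 e.succ_ne_zero, 1, by simp⟩
      · exact ⟨dvd_pow_self q e.succ_ne_zero, e, by rw [pow_succ', Nat.mul_div_cancel_left _ hq]⟩
  · rintro ⟨⟨l, rfl⟩, e, he⟩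
    rcases Nat.eq_zero_or_pos q with rfl | hq
    · exact ⟨1, by simp⟩
    · rw [Nat.mul_div_cancel_left _ hq] at he
      exact ⟨e + 1, by rw [he, pow_succ']⟩

namespace PowerSeries

variable {R : Type*} [CommRing R]

theorem coeff_pow_eq_zero_of_lt {φ : R⟦X⟧} (hφ : constantCoeff φ = 0) {n m : ℕ} (h : n < m) :
    coeff n (φ ^ m) = 0 :=
  X_pow_dvd_iff.1 (pow_dvd_pow_of_dvd (X_dvd_iff.2 hφ) m) n h

theorem coeff_X_sub_X_pow_of_two_le {q n : ℕ} (hn : 2 ≤ n) :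
    coeff n (X - X ^ q : R⟦X⟧) = -if n = q then 1 else 0 := by
  rw [map_sub, coeff_X, coeff_X_pow, if_neg (by omega), zero_sub]

theorem sum_coeff_X_sub_X_pow_mul_coeff_pow {q : ℕ} (hq : 2 ≤ q) {E : R⟦X⟧}
    (hE : constantCoeff E = 0) (n : ℕ) :
    ∑ i ∈ Ico 2 (n + 1), coeff i (X - X ^ q : R⟦X⟧) * coeff n (E ^ i) = -coeff n (E ^ q) := by
  have hterm : ∀ i ∈ Ico 2 (n + 1), coeff i (X - X ^ q : R⟦X⟧) * coeff n (E ^ i) =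
      -if q = i then coeff n (E ^ q) else 0 := fun i hi => by
    rw [coeff_X_sub_X_pow_of_two_le (mem_Ico.1 hi).1]
    by_cases h : q = i
    · simp [h]
    · simp [h, Ne.symm h]
  rw [sum_congr rfl hterm, sum_neg_distrib, sum_ite_eq]
  split_ifs with h
  · rfl
  · rw [coeff_pow_eq_zero_of_lt hE (by simp at h; omega), neg_zero]

theorem pow_prime_pow_eq_expand {p : ℕ} [Fact p.Prime] (f : ℕ) (φ : (ZMod p)⟦X⟧) :
    φ ^ p ^ f = expand (p ^ f) (pow_ne_zero f (Fact.out : p.Prime).ne_zero) φ := by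
  rw [← MvPowerSeries.map_iterateFrobenius_expand p (Fact.out : p.Prime).ne_zero φ f,
    Subsingleton.elim (iterateFrobenius (ZMod p) p f) (RingHom.id _), MvPowerSeries.map_id]
  rfl

theorem intCast_coeff_pow_prime_pow {p : ℕ} [Fact p.Prime] (f : ℕ) (φ : ℤ⟦X⟧) (n : ℕ) :
    ((coeff n (φ ^ p ^ f) : ℤ) : ZMod p) =
      if p ^ f ∣ n then ((coeff (n / p ^ f) φ : ℤ) : ZMod p) else 0 := by
  rw [← eq_intCast (Int.castRingHom (ZMod p)), ← coeff_map, map_pow, pow_prime_pow_eq_expand,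
    coeff_expand, coeff_map, eq_intCast]

/-- In degree `n`, `c φ(T/c) ≡ D(T)` modulo `c`. -/
def ScaledCoeffCong (c : R) (φ D : R⟦X⟧) (n : ℕ) : Prop :=
  c ^ n ∣ coeff n φ - coeff n D * c ^ (n - 1)

namespace ScaledCoeffCong

variable {c : R} {φ D : R⟦X⟧}

theorem zero : ScaledCoeffCong c φ D 0 := by
  simp [ScaledCoeffCong]

theorem pow_pred_dvd_coeff {n : ℕ} (h : ScaledCoeffCong c φ D n) : c ^ (n - 1) ∣ coeff n φ :=
  (dvd_sub_left (dvd_mul_left _ _)).1 ((pow_dvd_pow c (Nat.sub_le n 1)).trans h)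

theorem coeff_pow (hφ : constantCoeff φ = 0) (hD : constantCoeff D = 0) {n i : ℕ} (hi : 2 ≤ i)
    (h : ∀ l < n, ScaledCoeffCong c φ D l) :
    c ^ (n - i + 1) ∣ coeff n (φ ^ i) - coeff n (D ^ i) * c ^ (n - i) := by
  rw [PowerSeries.coeff_pow, PowerSeries.coeff_pow, sum_mul, ← sum_sub_distrib]
  refine dvd_sum fun l hl => ?_
  have hsum : ∑ t ∈ range i, l t = n := (mem_finsuppAntidiag.1 hl).1
  by_cases h0 : ∃ t ∈ range i, l t = 0
  · obtain ⟨t, ht, hlt⟩ := h0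
    rw [prod_eq_zero ht (by rw [hlt, coeff_zero_eq_constantCoeff, hφ]),
      prod_eq_zero ht (by rw [hlt, coeff_zero_eq_constantCoeff, hD]), zero_mul, sub_zero]
    exact dvd_zero _
  push Not at h0
  have hpos : ∀ t ∈ range i, 0 < l t := fun t ht => Nat.pos_of_ne_zero (h0 t ht)
  have hlt : ∀ t ∈ range i, l t < n := fun t ht => by
    obtain ⟨j, hj, hjt⟩ := exists_mem_ne (s := range i) (by rw [card_range]; omega) t
    exact hsum ▸ single_lt_sum hjt ht hj (hpos j hj) fun k _ _ => Nat.zero_le _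
  have hexp : ∑ t ∈ range i, (l t - 1) = n - i := by
    rw [sum_tsub_distrib _ hpos, hsum, sum_const, card_range, smul_eq_mul, mul_one]
  rw [← hexp]
  refine pow_sum_add_one_dvd_prod_sub c _ (fun t => l t - 1) _ _ fun t ht => ?_
  rw [Nat.sub_add_cancel (hpos t ht)]
  exact h _ (hlt t ht)

theorem sum_coeff_mul_coeff_pow {ψ E : R⟦X⟧} (hψ : constantCoeff ψ = 0)
    (hE : constantCoeff E = 0) {n : ℕ} (hφD : ∀ i ≤ n, ScaledCoeffCong c φ D i)
    (hψE : ∀ l < n, ScaledCoeffCong c ψ E l) :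
    c ^ n ∣ ∑ i ∈ Ico 2 (n + 1), coeff i φ * coeff n (ψ ^ i) -
      (∑ i ∈ Ico 2 (n + 1), coeff i D * coeff n (E ^ i)) * c ^ (n - 1) := by
  rw [sum_mul, ← sum_sub_distrib]
  refine dvd_sum fun i hi => ?_
  obtain ⟨hi2, hin⟩ := mem_Ico.1 hi
  have hφi : c ^ (i - 1 + 1) ∣ coeff i φ - coeff i D * c ^ (i - 1) := by
    rw [Nat.sub_add_cancel (by omega)]
    exact hφD i (by omega)
  have h := pow_add_add_one_dvd_mul_sub hφi (coeff_pow hψ hE hi2 hψE)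
  rwa [show i - 1 + (n - i) = n - 1 by omega, show n - 1 + 1 = n by omega] at h

end ScaledCoeffCong

end PowerSeries

theorem IsPsi.sum_pow_mul_coeff_pow_eq_zero {p q : ℕ} (hp : p ≠ 0) {Ψ : ℤ⟦X⟧}
    (hΨ : IsPsi p q Ψ) {n : ℕ} (hn : 2 ≤ n) :
    ∑ j ∈ range (n + 1), (p : ℤ) ^ (j * (n - 1)) * coeff n (Ψ ^ q ^ j) = 0 := by
  have h := hΨ.2.2 n
  rw [coeff_X, if_neg (by omega)] at h
  have hterm : ∀ j : ℕ, ((p : ℚ) ^ j)⁻¹ *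
        coeff n ((rescale ((p : ℚ) ^ j) (Ψ.map (Int.castRingHom ℚ))) ^ (q ^ j)) =
      (((p : ℤ) ^ (j * (n - 1)) * coeff n (Ψ ^ q ^ j) : ℤ) : ℚ) := fun j => by
    rw [← map_pow, coeff_rescale, ← map_pow, coeff_map, eq_intCast, ← pow_mul,
      show j * n = j * (n - 1) + j by rw [← mul_add_one, Nat.sub_add_cancel (by omega)], pow_add]
    push_cast
    field_simp
  rw [sum_congr rfl fun j _ => hterm j, ← Int.cast_sum] at h
  exact_mod_cast h

theorem dvd_coeff_pow_prime_pow_add {p f : ℕ} [Fact p.Prime] (hf : f ≠ 0) {φ : ℤ⟦X⟧}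
    (h1 : coeff 1 φ = 1) {n : ℕ} (hn : 2 ≤ n)
    (h : ∀ l < n, ScaledCoeffCong (p : ℤ) φ (X - X ^ p ^ f) l) :
    (p : ℤ) ∣ coeff n (φ ^ p ^ f) + coeff n (X - X ^ p ^ f : ℤ⟦X⟧) := by
  have hq : 2 ≤ p ^ f := Nat.one_lt_pow hf (Fact.out : p.Prime).one_lt
  rw [← ZMod.intCast_zmod_eq_zero_iff_dvd, Int.cast_add, intCast_coeff_pow_prime_pow,
    coeff_X_sub_X_pow_of_two_le hn]
  by_cases hdvd : p ^ f ∣ n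
  · obtain ⟨l, rfl⟩ := hdvd
    rw [if_pos (dvd_mul_right _ _), Nat.mul_div_cancel_left _ (by omega)]
    obtain rfl | hl : l = 1 ∨ 2 ≤ l := by
      rcases Nat.lt_or_ge l 2 with hl | hl
      · interval_cases l <;> simp_all
      · exact Or.inr hl
    · simp [h1]
    · have hpl : (p : ℤ) ∣ coeff l φ :=
        (dvd_pow_self _ (by omega)).trans (h l (by nlinarith)).pow_pred_dvd_coeff
      rw [(ZMod.intCast_zmod_eq_zero_iff_dvd _ p).2 hpl, if_neg (by nlinarith)]
      simp
  · rw [if_neg hdvd, if_neg fun hnq : n = p ^ f => hdvd (hnq ▸ dvd_rfl)]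
    simp

theorem IsPsi.scaledCoeffCong {p f : ℕ} [Fact p.Prime] (hf : f ≠ 0) {Ψ : ℤ⟦X⟧}
    (hΨ : IsPsi p (p ^ f) Ψ) (n : ℕ) : ScaledCoeffCong (p : ℤ) Ψ (X - X ^ p ^ f) n := by
  induction n using Nat.strong_induction_on with
  | _ n ih =>
  obtain rfl | rfl | hn : n = 0 ∨ n = 1 ∨ 2 ≤ n := by omega
  · exact .zero
  · have hq : p ^ f ≠ 1 := (Nat.one_lt_pow hf (Fact.out : p.Prime).one_lt).ne'
    simp [ScaledCoeffCong, hΨ.2.1, coeff_X_pow, hq.symm]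
  have hrec := hΨ.sum_pow_mul_coeff_pow_eq_zero (Fact.out : p.Prime).ne_zero hn
  rw [show n + 1 = n - 1 + 1 + 1 by omega, sum_range_succ', sum_range_succ'] at hrec
  simp only [zero_add, one_mul, zero_mul, pow_zero, pow_one] at hrec
  have htail : (p : ℤ) ^ n ∣ ∑ j ∈ range (n - 1),
      (p : ℤ) ^ ((j + 1 + 1) * (n - 1)) * coeff n (Ψ ^ (p ^ f) ^ (j + 1 + 1)) :=
    dvd_sum fun j _ => dvd_mul_of_dvd_left (pow_dvd_pow _
      ((show n ≤ 2 * (n - 1) by omega).trans (Nat.mul_le_mul_right _ (by omega)))) _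
  have hlead := mul_dvd_mul_left ((p : ℤ) ^ (n - 1))
    (dvd_coeff_pow_prime_pow_add hf hΨ.2.1 hn ih)
  rw [← pow_succ, Nat.sub_add_cancel (by omega)] at hlead
  have hsplit : coeff n Ψ - coeff n (X - X ^ p ^ f : ℤ⟦X⟧) * (p : ℤ) ^ (n - 1) =
      -(∑ j ∈ range (n - 1),
        (p : ℤ) ^ ((j + 1 + 1) * (n - 1)) * coeff n (Ψ ^ (p ^ f) ^ (j + 1 + 1))) -
      (p : ℤ) ^ (n - 1) * (coeff n (Ψ ^ p ^ f) + coeff n (X - X ^ p ^ f : ℤ⟦X⟧)) := by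
    linear_combination hrec
  rw [ScaledCoeffCong, hsplit]
  exact (dvd_neg.2 htail).sub hlead

open Classical in
/-- `∑ₑ T^(qᵉ)`: for `q` a power of `p`, the compositional inverse of `T - T^q` modulo `p`. -/
noncomputable def sumXPowPow (q : ℕ) : ℤ⟦X⟧ :=
  mk fun n => if ∃ e, n = q ^ e then 1 else 0

theorem constantCoeff_sumXPowPow {q : ℕ} (hq : q ≠ 0) : constantCoeff (sumXPowPow q) = 0 := by
  rw [← coeff_zero_eq_constantCoeff_apply, sumXPowPow, coeff_mk,
    if_neg fun ⟨e, he⟩ => pow_ne_zero e hq he.symm]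

theorem coeff_one_sumXPowPow (q : ℕ) : coeff 1 (sumXPowPow q) = 1 := by
  rw [sumXPowPow, coeff_mk, if_pos ⟨0, (pow_zero q).symm⟩]

theorem coeff_pow_sumXPowPow (q N : ℕ) : coeff (q ^ N) (sumXPowPow q) = 1 := by
  rw [sumXPowPow, coeff_mk, if_pos ⟨N, rfl⟩]

theorem dvd_coeff_sumXPowPow_pow_sub {p f : ℕ} [Fact p.Prime] {n : ℕ} (hn : n ≠ 1) :
    (p : ℤ) ∣ coeff n (sumXPowPow (p ^ f) ^ p ^ f) - coeff n (sumXPowPow (p ^ f)) := by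
  rw [← ZMod.intCast_zmod_eq_zero_iff_dvd, Int.cast_sub, intCast_coeff_pow_prime_pow, sumXPowPow,
    coeff_mk, coeff_mk, Nat.exists_eq_pow_iff_dvd_and hn]
  split_ifs <;> simp_all

theorem IsCompInv.scaledCoeffCong {p f : ℕ} [Fact p.Prime] (hf : f ≠ 0) {Ψ β : ℤ⟦X⟧}
    (hΨ : IsPsi p (p ^ f) Ψ) (hβ : IsCompInv Ψ β) (n : ℕ) :
    ScaledCoeffCong (p : ℤ) β (sumXPowPow (p ^ f)) n := by
  induction n using Nat.strong_induction_on with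
  | _ n ih =>
  obtain rfl | rfl | hn : n = 0 ∨ n = 1 ∨ 2 ≤ n := by omega
  · exact .zero
  · simp [ScaledCoeffCong, hβ.2.1, coeff_one_sumXPowPow]
  have hq : 2 ≤ p ^ f := Nat.one_lt_pow hf (Fact.out : p.Prime).one_lt
  have hcomp := hβ.2.2.1 n
  rw [coeff_X, if_neg (by omega), ← sum_range_add_sum_Ico _ (by omega : 2 ≤ n + 1)] at hcomp
  simp only [sum_range_succ, sum_range_zero, coeff_zero_eq_constantCoeff, hΨ.1, hΨ.2.1,
    pow_zero, pow_one, zero_mul, one_mul, zero_add] at hcomp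
  have hsum := ScaledCoeffCong.sum_coeff_mul_coeff_pow hβ.1 (constantCoeff_sumXPowPow (by omega))
    (fun i _ => hΨ.scaledCoeffCong hf i) ih
  rw [sum_coeff_X_sub_X_pow_mul_coeff_pow hq (constantCoeff_sumXPowPow (by omega))] at hsum
  have hfrob := mul_dvd_mul_left ((p : ℤ) ^ (n - 1))
    (dvd_coeff_sumXPowPow_pow_sub (p := p) (f := f) (show n ≠ 1 by omega))
  rw [← pow_succ, Nat.sub_add_cancel (by omega)] at hfrob
  rw [ScaledCoeffCong]
  convert (dvd_neg.2 hsum).add hfrob using 1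
  linear_combination hcomp

section Ultrametric

variable {K : Type*} [NormedField K]

theorem norm_intCast_le_of_pow_dvd [IsUltrametricDist K] {c b : ℤ} {m : ℕ} (h : c ^ m ∣ b) :
    ‖(b : K)‖ ≤ ‖(c : K)‖ ^ m := by
  obtain ⟨u, rfl⟩ := h
  rw [Int.cast_mul, Int.cast_pow, norm_mul, norm_pow]
  exact mul_le_of_le_one_right (by positivity) (IsUltrametricDist.norm_intCast_le_one K u)

theorem norm_intCast_eq_of_pow_dvd_sub [IsUltrametricDist K] {c b : ℤ} (hc : ‖(c : K)‖ < 1)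
    {m : ℕ} (h : c ^ (m + 1) ∣ b - c ^ m) : ‖(b : K)‖ = ‖(c : K)‖ ^ m := by
  obtain ⟨u, hu⟩ := h
  have hunit : ‖((1 + c * u : ℤ) : K)‖ = 1 := by
    have hcu : ‖((c * u : ℤ) : K)‖ < ‖((1 : ℤ) : K)‖ := by
      rw [Int.cast_mul, norm_mul, Int.cast_one, norm_one]
      exact (mul_le_of_le_one_right (norm_nonneg _)
        (IsUltrametricDist.norm_intCast_le_one K u)).trans_lt hc
    rw [Int.cast_add, IsUltrametricDist.norm_add_eq_max_of_norm_ne_norm hcu.ne',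
      max_eq_left hcu.le, Int.cast_one, norm_one]
  rw [show b = c ^ m * (1 + c * u) by linear_combination hu, Int.cast_mul, norm_mul, hunit,
    mul_one, Int.cast_pow, norm_pow]

theorem summable_mul_pow_of_norm_le [CompleteSpace K] {a : ℕ → K} {r : ℝ} (hr : 1 ≤ r)
    (ha : ∀ n, ‖a n‖ ≤ r⁻¹ ^ (n - 1)) {x : K} (hx : ‖x‖ < r) :
    Summable fun n => a n * x ^ n := by
  have hr0 : 0 < r := by linarith
  refine Summable.of_norm_bounded
    ((summable_geometric_of_lt_one (by positivity) ((div_lt_one hr0).2 hx)).mul_left r)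
    fun n => ?_
  rw [norm_mul, norm_pow]
  have hpow : r⁻¹ ^ (n - 1) ≤ r * r⁻¹ ^ n := by
    rcases n with _ | n
    · simpa using hr
    · rw [Nat.add_sub_cancel, pow_succ', ← mul_assoc, mul_inv_cancel₀ hr0.ne', one_mul]
  calc ‖a n‖ * ‖x‖ ^ n ≤ r⁻¹ ^ (n - 1) * ‖x‖ ^ n := by gcongr; exact ha n
    _ ≤ r * r⁻¹ ^ n * ‖x‖ ^ n := by gcongr
    _ = r * (‖x‖ / r) ^ n := by rw [div_pow, inv_pow]; ring

theorem not_summable_mul_pow {a : ℕ → K} {r : ℝ} (hr : 0 < r)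
    (ha : ∃ᶠ n in Filter.atTop, ‖a n‖ = r⁻¹ ^ (n - 1)) {x : K} (hx : ‖x‖ = r) :
    ¬Summable fun n => a n * x ^ n := by
  intro hs
  have hsmall : ∀ᶠ n in Filter.atTop, ‖a n * x ^ n‖ < r :=
    hs.tendsto_atTop_zero.norm.eventually_lt_const (by simpa using hr)
  obtain ⟨n, han, hlt, hn⟩ :=
    (ha.and_eventually (hsmall.and (Filter.eventually_ge_atTop 1))).exists
  obtain ⟨k, rfl⟩ : ∃ k, n = k + 1 := ⟨n - 1, by omega⟩
  rw [norm_mul, norm_pow, han, hx, Nat.add_sub_cancel, pow_succ, ← mul_assoc, ← mul_pow,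
    inv_mul_cancel₀ hr.ne', one_pow, one_mul] at hlt
  exact hlt.false

end Ultrametric

theorem beta_disc_of_convergence_general (p f : ℕ) (hp : p.Prime) (hf : 0 < f)
    (q : ℕ) (hq : q = p ^ f)
    (Ψ β : PowerSeries ℤ) (hΨ : IsPsi p q Ψ) (hβ : IsCompInv Ψ β)
    (K : Type) [NormedField K] [CompleteSpace K]
    (hna : IsUltrametricDist K) (hpK : ‖(p : K)‖ = (p : ℝ)⁻¹) :
    (∀ x : K, ‖x‖ < (p : ℝ) →
      Summable (fun i : ℕ => ((PowerSeries.coeff i β : ℤ) : K) * x ^ i)) ∧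
    (∃ x : K, ‖x‖ = (p : ℝ) ∧
      ¬ Summable (fun i : ℕ => ((PowerSeries.coeff i β : ℤ) : K) * x ^ i)) := by
  subst hq
  have := Fact.mk hp
  have hcong := hβ.scaledCoeffCong hf.ne' hΨ
  have hpK' : ‖((p : ℤ) : K)‖ = (p : ℝ)⁻¹ := by rwa [Int.cast_natCast]
  have hp1 : (1 : ℝ) < p := by exact_mod_cast hp.one_lt
  have hx₀ : ‖(p : K)⁻¹‖ = p := by rw [norm_inv, hpK, inv_inv]
  refine ⟨fun x hx => summable_mul_pow_of_norm_le hp1.le (fun n => ?_) hx,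
    (p : K)⁻¹, hx₀, not_summable_mul_pow (by positivity) ?_ hx₀⟩
  · rw [← hpK']
    exact norm_intCast_le_of_pow_dvd (hcong n).pow_pred_dvd_coeff
  · refine Filter.frequently_atTop.2 fun N => ⟨(p ^ f) ^ N, ?_, ?_⟩
    · exact (Nat.lt_pow_self (Nat.one_lt_pow hf.ne' hp.one_lt)).le
    · have h := hcong ((p ^ f) ^ N)
      rw [ScaledCoeffCong, coeff_pow_sumXPowPow, one_mul] at h
      rw [← hpK']
      refine norm_intCast_eq_of_pow_dvd_sub (hpK' ▸ inv_lt_one_of_one_lt₀ hp1) ?_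
      rwa [Nat.sub_add_cancel (Nat.one_le_pow N _ (pow_pos hp.pos f))]

/-- the inverse series `β_q ∈ T + T²ℤ[[T]]` of `Ψ_q` has exact disc of
convergence `{T ∈ ℂ_p : v_p(T) > -1} = {T : ‖T‖ < p}`: it converges there and diverges
at some point of the boundary `v_p(T) = -1`. Here `ℂ_p` is modelled as a complete
algebraically closed nonarchimedean normed field `K` with `‖p‖ = p⁻¹`. -/
theorem beta_disc_of_convergence (p f : ℕ) (hp : p.Prime) (hf : 0 < f)
    (q : ℕ) (hq : q = p ^ f)
    (Ψ β : PowerSeries ℤ) (hΨ : IsPsi p q Ψ) (hβ : IsCompInv Ψ β)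
    (K : Type) [NormedField K] [CompleteSpace K] [IsAlgClosed K]
    (hna : IsUltrametricDist K) (hpK : ‖(p : K)‖ = (p : ℝ)⁻¹) :
    (∀ x : K, ‖x‖ < (p : ℝ) →
      Summable (fun i : ℕ => ((PowerSeries.coeff i β : ℤ) : K) * x ^ i)) ∧
    (∃ x : K, ‖x‖ = (p : ℝ) ∧
      ¬ Summable (fun i : ℕ => ((PowerSeries.coeff i β : ℤ) : K) * x ^ i)) :=
  beta_disc_of_convergence_general p f hp hf q hq Ψ β hΨ hβ K hna hpK
end
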